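/- arXiv:2511.03607 — 8 statements merged into one kernel-verified Lean document; each statement's English description precedes it below -/
import Mathlib

section
/- For a sequence (a_n) of pairwise orthogonal self-adjoint elements of a C*-algebra (a_n * a_m = 0 for n ≠ m), the series ∑ a_n converges in norm if and only if ‖a_n‖ → 0. -/
/-!
For self-adjoint `x` the C⋆-identity reads `‖x * x‖ = ‖x‖ ^ 2`, and squaring a sum of pairwise
orthogonal self-adjoint elements gives the sum of their squares, again pairwise orthogonal and
self-adjoint. Iterating, `‖∑ i ∈ s, f i‖ ^ 2 ^ k ≤ #s * M ^ 2 ^ k` for every `k` whenever all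
`‖f i‖ ≤ M`, and letting `k → ∞` gives `‖∑ i ∈ s, f i‖ ≤ M`. Hence the tails of the series are
uniformly small once `‖a n‖ → 0`, so the series is even unconditionally summable.
-/

open Filter Finset

theorem le_of_forall_pow_two_pow_le_mul_pow {x c M : ℝ} (hM : 0 ≤ M)
    (h : ∀ k : ℕ, x ^ 2 ^ k ≤ c * M ^ 2 ^ k) : x ≤ M := by
  by_contra! hMx
  have hx : 0 < x := hM.trans_lt hMx
  have hone : ∀ k : ℕ, 1 ≤ c * (M / x) ^ 2 ^ k := fun k => by
    rw [div_pow, mul_div_assoc', one_le_div (pow_pos hx _)]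
    exact h k
  have hlim : Tendsto (fun k : ℕ => c * (M / x) ^ 2 ^ k) atTop (nhds 0) := by
    simpa using ((tendsto_pow_atTop_nhds_zero_of_lt_one (div_nonneg hM hx.le)
      ((div_lt_one hx).2 hMx)).comp (tendsto_pow_atTop_atTop_of_one_lt one_lt_two)).const_mul c
  exact absurd (ge_of_tendsto' hlim hone) (by norm_num)

theorem tendsto_nhds_zero_of_tendsto_sum_range {G : Type*} [AddCommGroup G] [TopologicalSpace G]
    [IsTopologicalAddGroup G] {f : ℕ → G} {s : G}
    (h : Tendsto (fun N => ∑ n ∈ range N, f n) atTop (nhds s)) :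
    Tendsto f atTop (nhds 0) := by
  simpa [sum_range_succ_sub_sum] using (h.comp (tendsto_add_atTop_nat 1)).sub h

theorem Finset.sum_mul_sum_eq_sum_mul_self {R ι : Type*} [NonUnitalNonAssocSemiring R]
    {s : Finset ι} {f : ι → R} (horth : (s : Set ι).Pairwise fun i j => f i * f j = 0) :
    (∑ i ∈ s, f i) * (∑ i ∈ s, f i) = ∑ i ∈ s, f i * f i := by
  rw [sum_mul_sum]
  exact sum_congr rfl fun i hi =>
    sum_eq_single_of_mem i hi fun j hj hji => horth hi hj hji.symm

section CStarRing

variable {A ι : Type*} [NonUnitalNormedRing A] [StarRing A] [CStarRing A]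

theorem norm_sum_pow_two_pow_le_of_pairwise_mul_eq_zero {s : Finset ι} {f : ι → A}
    (hsa : ∀ i ∈ s, IsSelfAdjoint (f i)) (horth : (s : Set ι).Pairwise fun i j => f i * f j = 0)
    (k : ℕ) : ‖∑ i ∈ s, f i‖ ^ 2 ^ k ≤ ∑ i ∈ s, ‖f i‖ ^ 2 ^ k := by
  induction k generalizing f with
  | zero => simpa using norm_sum_le s f
  | succ k ih =>
    have hsq_sa : ∀ i ∈ s, IsSelfAdjoint (f i * f i) := fun i hi => by
      simpa [(hsa i hi).star_eq] using IsSelfAdjoint.star_mul_self (f i)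
    have hsq_orth : (s : Set ι).Pairwise fun i j => f i * f i * (f j * f j) = 0 :=
      fun i hi j hj hij => show f i * f i * (f j * f j) = 0 by
        rw [mul_assoc, ← mul_assoc (f i) (f j), horth hi hj hij, zero_mul, mul_zero]
    calc ‖∑ i ∈ s, f i‖ ^ 2 ^ (k + 1)
        = ‖(∑ i ∈ s, f i) * (∑ i ∈ s, f i)‖ ^ 2 ^ k := by
          rw [(isSelfAdjoint_sum s hsa).norm_mul_self, ← pow_mul, ← pow_succ']
      _ = ‖∑ i ∈ s, f i * f i‖ ^ 2 ^ k := by rw [sum_mul_sum_eq_sum_mul_self horth]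
      _ ≤ ∑ i ∈ s, ‖f i * f i‖ ^ 2 ^ k := ih hsq_sa hsq_orth
      _ = ∑ i ∈ s, ‖f i‖ ^ 2 ^ (k + 1) := sum_congr rfl fun i hi => by
          rw [(hsa i hi).norm_mul_self, ← pow_mul, ← pow_succ']

theorem norm_sum_le_of_pairwise_mul_eq_zero {s : Finset ι} {f : ι → A} {M : ℝ}
    (hsa : ∀ i ∈ s, IsSelfAdjoint (f i)) (horth : (s : Set ι).Pairwise fun i j => f i * f j = 0)
    (hM : 0 ≤ M) (hfM : ∀ i ∈ s, ‖f i‖ ≤ M) : ‖∑ i ∈ s, f i‖ ≤ M := by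
  refine le_of_forall_pow_two_pow_le_mul_pow (c := #s) hM fun k => ?_
  calc ‖∑ i ∈ s, f i‖ ^ 2 ^ k ≤ ∑ i ∈ s, ‖f i‖ ^ 2 ^ k :=
        norm_sum_pow_two_pow_le_of_pairwise_mul_eq_zero hsa horth k
    _ ≤ #s * M ^ 2 ^ k := by
        simpa using sum_le_card_nsmul s _ _ fun i hi =>
          pow_le_pow_left₀ (norm_nonneg _) (hfM i hi) _

theorem summable_of_pairwise_mul_eq_zero [CompleteSpace A] {f : ι → A}
    (hsa : ∀ i, IsSelfAdjoint (f i)) (horth : Pairwise fun i j => f i * f j = 0)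
    (hf : Tendsto (fun i => ‖f i‖) cofinite (nhds 0)) : Summable f := by
  refine summable_iff_vanishing_norm.2 fun ε hε => ?_
  have hsmall : {i | ¬‖f i‖ ≤ ε / 2}.Finite :=
    eventually_cofinite.1 (hf.eventually (ge_mem_nhds (half_pos hε)))
  refine ⟨hsmall.toFinset, fun t ht => ?_⟩
  have hfε : ∀ i ∈ t, ‖f i‖ ≤ ε / 2 := fun i hi => by
    simpa using (disjoint_left.1 ht hi : i ∉ hsmall.toFinset)
  calc ‖∑ i ∈ t, f i‖ ≤ ε / 2 :=
        norm_sum_le_of_pairwise_mul_eq_zero (fun i _ => hsa i) (horth.set_pairwise _)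
          (half_pos hε).le hfε
    _ < ε := half_lt_self hε

end CStarRing

theorem stmt_3 {A : Type*} [NonUnitalNormedRing A] [StarRing A] [CStarRing A]
    [CompleteSpace A] (a : ℕ → A) (hsa : ∀ n, IsSelfAdjoint (a n))
    (horth : ∀ n m, n ≠ m → a n * a m = 0) :
    (∃ s : A, Tendsto (fun N => ∑ n ∈ Finset.range N, a n) atTop (nhds s)) ↔
      Tendsto (fun n => ‖a n‖) atTop (nhds 0) := by
  refine ⟨fun ⟨s, hs⟩ => by simpa using (tendsto_nhds_zero_of_tendsto_sum_range hs).norm,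
    fun h => ?_⟩
  rw [← Nat.cofinite_eq_atTop] at h
  exact ⟨_, (summable_of_pairwise_mul_eq_zero hsa horth h).hasSum.tendsto_sum_nat⟩
end

section
/- For every bounded sequence x ∈ ℓ∞(ℕ, ℂ), the distance from x to the subspace c₀ of sequences converging to 0 equals limsup_n |x n|. Equivalently, the quotient norm of the image of x in ℓ∞/c₀ is limsup_n |x n|. -/
/-!
A sequence tending to `0` is eventually smaller than any `ε > 0`, so along the cofinite filter
`‖x i‖ ≤ ‖x - y‖ + ‖y i‖` gives `limsup ‖x i‖ ≤ ‖x - y‖` for every `y ∈ c₀`. Conversely, if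
`‖x i‖ ≤ c` outside a finite set `s`, then the restriction of `x` to `s` lies in `c₀` and is at
distance at most `c` from `x`. On `ℕ` the cofinite filter is `atTop`.
-/

open Filter Topology

namespace lp

variable {α E : Type*} [NormedAddCommGroup E]

theorem norm_apply_sub_le_dist (x y : lp (fun _ : α => E) ⊤) (i : α) :
    ‖x i - y i‖ ≤ dist x y := by
  rw [dist_eq_norm, ← Pi.sub_apply, ← coeFn_sub]
  exact norm_apply_le_norm ENNReal.top_ne_zero _ i

theorem isBoundedUnder_norm_apply (l : Filter α) (x : lp (fun _ : α => E) ⊤) :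
    IsBoundedUnder (· ≤ ·) l (fun i => ‖x i‖) :=
  isBoundedUnder_of ⟨‖x‖, norm_apply_le_norm ENNReal.top_ne_zero x⟩

theorem limsup_norm_le_dist_of_tendsto_zero {l : Filter α} [l.NeBot]
    (x y : lp (fun _ : α => E) ⊤) (hy : Tendsto (fun i => ‖y i‖) l (𝓝 0)) :
    limsup (fun i => ‖x i‖) l ≤ dist x y := by
  have hbound : Tendsto (fun i => dist x y + ‖y i‖) l (𝓝 (dist x y)) := by
    simpa using tendsto_const_nhds.add hy
  calc limsup (fun i => ‖x i‖) l
      ≤ limsup (fun i => dist x y + ‖y i‖) l := by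
        refine limsup_le_limsup (Eventually.of_forall fun i => ?_)
          (isCoboundedUnder_le_of_le l fun i => norm_nonneg _) hbound.isBoundedUnder_le
        calc ‖x i‖ ≤ ‖x i - y i‖ + ‖y i‖ := norm_le_norm_sub_add _ _
          _ ≤ dist x y + ‖y i‖ := by gcongr; exact norm_apply_sub_le_dist x y i
    _ = dist x y := hbound.limsup_eq

theorem infDist_setOf_tendsto_zero_le_of_eventually_norm_le [Infinite α]
    (x : lp (fun _ : α => E) ⊤) {c : ℝ} (h : ∀ᶠ i in cofinite, ‖x i‖ ≤ c) :
    Metric.infDist x {y : lp (fun _ : α => E) ⊤ | Tendsto (fun i => y i) cofinite (𝓝 0)} ≤ c := by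
  obtain ⟨i₀, hi₀⟩ := h.exists
  have hc : 0 ≤ c := (norm_nonneg _).trans hi₀
  set s : Set α := {i | ‖x i‖ ≤ c}ᶜ
  let y : lp (fun _ : α => E) ⊤ :=
    ⟨s.indicator x, (lp.memℓp x).mono' fun _ => norm_indicator_le_norm_self _ _⟩
  have hy : Tendsto (fun i => y i) cofinite (𝓝 0) :=
    tendsto_const_nhds.congr' <| h.mono fun i hi =>
      (Set.indicator_of_notMem (s := s) (Set.notMem_compl_iff.2 hi) x).symm
  refine (Metric.infDist_le_dist_of_mem hy).trans ?_
  have hxy : ⇑(x - y) = {i | ‖x i‖ ≤ c}.indicator x := by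
    rw [coeFn_sub, ← compl_compl {i | ‖x i‖ ≤ c}, Set.indicator_compl]
  rw [dist_eq_norm]
  refine norm_le_of_forall_le hc fun i => ?_
  rw [hxy, Set.indicator_apply]
  split_ifs with hi
  exacts [hi, _root_.norm_zero.trans_le hc]

theorem infDist_setOf_tendsto_zero_eq_limsup [Infinite α] (x : lp (fun _ : α => E) ⊤) :
    Metric.infDist x {y : lp (fun _ : α => E) ⊤ | Tendsto (fun i => y i) cofinite (𝓝 0)} =
      limsup (fun i => ‖x i‖) cofinite := by
  refine le_antisymm (le_of_forall_gt_imp_ge_of_dense fun c hc => ?_) ?_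
  · exact infDist_setOf_tendsto_zero_le_of_eventually_norm_le x
      ((eventually_lt_of_limsup_lt hc (isBoundedUnder_norm_apply _ x)).mono fun _ => le_of_lt)
  · refine (Metric.le_infDist ⟨0, tendsto_const_nhds⟩).2 fun y hy => ?_
    exact limsup_norm_le_dist_of_tendsto_zero x y (by simpa using hy.norm)

end lp

theorem stmt_4 (x : lp (fun _ : ℕ => ℂ) ⊤) :
    Metric.infDist x
      {y : lp (fun _ : ℕ => ℂ) ⊤ | Tendsto (fun n => y n) atTop (nhds 0)} =
    limsup (fun n => ‖x n‖) atTop := by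
  rw [← Nat.cofinite_eq_atTop]
  exact lp.infDist_setOf_tendsto_zero_eq_limsup x
end

section
/- Let I be an ideal of subsets of ℕ (closed under subsets and finite unions) containing all finite sets, and suppose I has the selection property: for every strictly increasing function f : ℕ → ℕ with f 0 = 0 there exists an infinite L ⊆ ℕ with ⋃_{n ∈ L} [f n, f (n+1)) ∈ I. Then I is tall (dense): every infinite S ⊆ ℕ contains an infinite subset belonging to I. -/
/-!
Enumerate the infinite set `S` increasingly as `g 0 < g 1 < ⋯` and cut `ℕ` at the points
`0, g 0 + 1, g 1 + 1, …`, so that the `n`-th interval contains `g n`. The selection property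
yields infinitely many intervals whose union lies in `I`; the points of `S` they contain form the
required infinite subset.
-/

def cutsAfter (g : ℕ → ℕ) : ℕ → ℕ
  | 0 => 0
  | n + 1 => g n + 1

section cutsAfter

variable {g : ℕ → ℕ} (hg : StrictMono g)
include hg

theorem strictMono_cutsAfter : StrictMono (cutsAfter g) := by
  refine strictMono_nat_of_lt_succ fun n => ?_
  cases n with
  | zero => exact Nat.succ_pos _
  | succ n => exact Nat.succ_lt_succ (hg n.lt_succ_self)

theorem mem_Ico_cutsAfter (n : ℕ) : g n ∈ Set.Ico (cutsAfter g n) (cutsAfter g (n + 1)) := by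
  refine ⟨?_, Nat.lt_succ_self _⟩
  cases n with
  | zero => exact Nat.zero_le _
  | succ n => exact hg n.lt_succ_self

theorem image_subset_biUnion_Ico_cutsAfter (L : Set ℕ) :
    g '' L ⊆ ⋃ n ∈ L, Set.Ico (cutsAfter g n) (cutsAfter g (n + 1)) := by
  rintro _ ⟨n, hn, rfl⟩
  exact Set.mem_biUnion hn (mem_Ico_cutsAfter hg n)

end cutsAfter

theorem stmt_6_general (I : Set (Set ℕ))
    (hsubset : ∀ S T : Set ℕ, S ⊆ T → T ∈ I → S ∈ I)
    (hsel : ∀ f : ℕ → ℕ, StrictMono f → f 0 = 0 →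
      ∃ L : Set ℕ, L.Infinite ∧ (⋃ n ∈ L, Set.Ico (f n) (f (n + 1))) ∈ I) :
    ∀ S : Set ℕ, S.Infinite → ∃ T : Set ℕ, T ⊆ S ∧ T.Infinite ∧ T ∈ I := by
  intro S hS
  have hg : StrictMono (Nat.nth (· ∈ S)) := Nat.nth_strictMono hS
  obtain ⟨L, hL, hLI⟩ := hsel (cutsAfter (Nat.nth (· ∈ S))) (strictMono_cutsAfter hg) rfl
  refine ⟨Nat.nth (· ∈ S) '' L, ?_, hL.image hg.injective.injOn, ?_⟩
  · rintro _ ⟨n, -, rfl⟩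
    exact Nat.nth_mem_of_infinite hS n
  · exact hsubset _ _ (image_subset_biUnion_Ico_cutsAfter hg L) hLI

theorem stmt_6 (I : Set (Set ℕ))
    (hsubset : ∀ S T : Set ℕ, S ⊆ T → T ∈ I → S ∈ I)
    (hunion : ∀ S T : Set ℕ, S ∈ I → T ∈ I → S ∪ T ∈ I)
    (hfin : ∀ S : Set ℕ, S.Finite → S ∈ I)
    (hsel : ∀ f : ℕ → ℕ, StrictMono f → f 0 = 0 →
      ∃ L : Set ℕ, L.Infinite ∧ (⋃ n ∈ L, Set.Ico (f n) (f (n + 1))) ∈ I) :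
    ∀ S : Set ℕ, S.Infinite → ∃ T : Set ℕ, T ⊆ S ∧ T.Infinite ∧ T ∈ I :=
  stmt_6_general I hsubset hsel
end

section
/- Every proper ideal on ℕ that contains all finite sets and has the Baire property, when viewed as a subset of the Cantor space 2^ℕ (identifying sets with their characteristic functions), is meagre. -/
/-!
Cantor space `ℕ → Bool` is an abelian topological group under pointwise `xor` (the `+` of the
Boolean ring `Bool`), and the characteristic functions of the ideal form a set `A` closed under
`+`. Since the ideal contains all finite sets, `A` is invariant under translation by the countable
dense subgroup of finitely supported sequences, so by the topological zero-one law a set with the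
Baire property such as `A` is meagre or comeagre. If `A` were comeagre, so would be its translate
by the constant sequence `1`, i.e. the set of complements; a point in both gives `S ∈ I` and
`Sᶜ ∈ I`, hence `univ ∈ I`.
-/

open Set Filter Topology Pointwise

section TopologicalAddGroup

variable {G : Type*} [TopologicalSpace G] [AddGroup G] [IsTopologicalAddGroup G]

theorem IsMeagre.countable_add {H M : Set G} (hM : IsMeagre M) (hH : H.Countable) :
    IsMeagre (H + M) := by
  rw [← iUnion_add_left_image]
  refine isMeagre_biUnion hH fun h _ => ?_
  rw [image_add_left]
  exact hM.preimage_of_isOpenMap (Homeomorph.addLeft (-h)).continuous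
    (Homeomorph.addLeft (-h)).isOpenMap

theorem Dense.add_of_nonempty {H U : Set G} (hH : Dense H) (hU : U.Nonempty) :
    Dense (H + U) := by
  obtain ⟨u, hu⟩ := hU
  refine Dense.mono (add_subset_add_left (singleton_subset_iff.mpr hu)) ?_
  rw [add_singleton]
  exact (Homeomorph.addRight u).isDenseEmbedding.dense_image.mpr hH

theorem isMeagre_or_mem_residual_of_add_invariant {H A : Set G} (hHc : H.Countable)
    (hHd : Dense H) (hA : BaireMeasurableSet A) (hinv : ∀ h ∈ H, ∀ x ∈ A, h + x ∈ A) :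
    IsMeagre A ∨ A ∈ residual G := by
  obtain ⟨U, hUo, hAU⟩ := hA.residualEq_isOpen
  have hAU' := eventuallyEq_set.mp hAU
  rcases U.eq_empty_or_nonempty with rfl | hU
  · left
    filter_upwards [hAU'] with x hx using by simpa using hx
  · right
    have hUA : IsMeagre (U \ A) := by
      filter_upwards [hAU'] with x hx hxUA using hxUA.2 (hx.mpr hxUA.1)
    have hW : H + U ∈ residual G :=
      residual_of_dense_open hUo.add_left (hHd.add_of_nonempty hU)
    have hWA : (H + U) \ A ⊆ H + (U \ A) := by
      rintro _ ⟨⟨h, hh, u, hu, rfl⟩, hx⟩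
      exact add_mem_add hh ⟨hu, fun huA => hx (hinv h hh u huA)⟩
    filter_upwards [hW, (hUA.countable_add hHc).mono hWA] with x hxW hx
    by_contra hxA
    exact hx ⟨hxW, hxA⟩

end TopologicalAddGroup

section CantorSpace

variable {ι : Type*}

theorem Bool.support_eq_setOf_eq_true (x : ι → Bool) : x.support = {i | x i = true} := by
  ext i
  simp [Bool.zero_eq_false]

theorem countable_setOf_support_finite [Countable ι] :
    {d : ι → Bool | d.support.Finite}.Countable := by
  refine Countable.ofPred_finite.preimage fun d e hde => funext fun i => ?_
  simp only [Bool.support_eq_setOf_eq_true, Set.ext_iff, mem_ofPred_eq] at hde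
  exact Bool.eq_iff_iff.mpr (hde i)

theorem dense_setOf_support_finite : Dense {d : ι → Bool | d.support.Finite} := by
  classical
  intro x
  refine mem_closure_of_tendsto (f := fun (s : Finset ι) i => decide (i ∈ s) && x i)
    (b := atTop) ?_ (Eventually.of_forall fun s => s.finite_toSet.subset ?_)
  · refine tendsto_pi_nhds.mpr fun i => tendsto_nhds_of_eventually_eq ?_
    filter_upwards [eventually_ge_atTop {i}] with s hs
    simp [Finset.singleton_subset_iff.mp hs]
  · intro i hi
    simp_all [Bool.support_eq_setOf_eq_true]

end CantorSpace

theorem stmt_7 (I : Set (Set ℕ))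
    (hsubset : ∀ S T : Set ℕ, S ⊆ T → T ∈ I → S ∈ I)
    (hunion : ∀ S T : Set ℕ, S ∈ I → T ∈ I → S ∪ T ∈ I)
    (hfin : ∀ S : Set ℕ, S.Finite → S ∈ I)
    (hproper : Set.univ ∉ I)
    (hBP : BaireMeasurableSet {x : ℕ → Bool | {n | x n = true} ∈ I}) :
    IsMeagre {x : ℕ → Bool | {n | x n = true} ∈ I} := by
  simp only [← Bool.support_eq_setOf_eq_true] at hBP ⊢
  set A := {x : ℕ → Bool | x.support ∈ I}
  have hadd : ∀ x ∈ A, ∀ y ∈ A, x + y ∈ A := fun x hx y hy =>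
    hsubset _ _ (Function.support_add x y) (hunion _ _ hx hy)
  refine (isMeagre_or_mem_residual_of_add_invariant countable_setOf_support_finite
    dense_setOf_support_finite hBP fun d hd x hx => hadd d (hfin _ hd) x hx).resolve_right
    fun hA => hproper ?_
  have hA' : (1 + ·) ⁻¹' A ∈ residual (ℕ → Bool) :=
    tendsto_residual_of_isOpenMap (Homeomorph.addLeft 1).continuous
      (Homeomorph.addLeft 1).isOpenMap hA
  obtain ⟨x, hx, hx'⟩ := (dense_of_mem_residual (inter_mem hA hA')).nonempty
  have hsum : x + (1 + x) = 1 := funext fun n => by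
    simp only [Pi.add_apply, Pi.one_apply]; cases x n <;> rfl
  simpa [hsum, A, Function.support_one] using hadd x hx _ hx'
end

section
/- If an ideal I on ℕ containing all finite sets is nonmeagre as a subset of the Cantor space 2^ℕ, then for every strictly increasing f : ℕ → ℕ with f 0 = 0 there is an infinite L ⊆ ℕ such that ⋃_{n ∈ L} [f n, f (n+1)) ∈ I. -/
/-!
Cut ℕ into the finite blocks `[f n, f (n + 1))`. If the conclusion failed, every set in `I` would
contain only finitely many whole blocks, so every point of `I` lies in one of the closed sets
"from block `k` on, every block has a point outside `x`". Each of these is nowhere dense, since any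
basic open set fixes only finitely many coordinates and can be extended by filling a far block;
hence `I` would be meagre.
-/

open Set

section Blocks

variable {ι α : Type*}

def containsNoBlock (A : ι → Set α) (s : Set ι) : Set (α → Bool) :=
  {x | ∀ i ∈ s, ∃ a ∈ A i, x a = false}

variable {A : ι → Set α} {s : Set ι}

theorem isClosed_containsNoBlock (hA : ∀ i ∈ s, (A i).Finite) :
    IsClosed (containsNoBlock A s) := by
  have hrepr : containsNoBlock A s = ⋂ i ∈ s, ⋃ a ∈ A i, {x : α → Bool | x a = false} := by
    ext x
    simp [containsNoBlock]
  rw [hrepr]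
  exact isClosed_biInter fun i hi => (hA i hi).isClosed_biUnion fun a _ =>
    isClosed_eq (continuous_apply a) continuous_const

theorem interior_containsNoBlock_eq_empty (hA : ∀ J : Finset α, ∃ i ∈ s, Disjoint (A i) J) :
    interior (containsNoBlock A s) = ∅ := by
  classical
  refine eq_empty_iff_forall_notMem.2 fun x hx => ?_
  obtain ⟨J, u, hu, hJu⟩ := isOpen_pi_iff.1 isOpen_interior x hx
  obtain ⟨i, hi, hdisj⟩ := hA J
  -- fill the block `A i`, which the basic neighbourhood `J.pi u` of `x` does not see
  set y : α → Bool := fun a => if a ∈ A i then true else x a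
  have hy : y ∈ (J : Set α).pi u := fun j hj => by
    simpa [y, hdisj.notMem_of_mem_right hj] using (hu j hj).2
  obtain ⟨a, ha, hya⟩ := interior_subset (hJu hy) i hi
  simp [y, ha] at hya

theorem isNowhereDense_containsNoBlock (hfin : ∀ i ∈ s, (A i).Finite)
    (hdisj : ∀ J : Finset α, ∃ i ∈ s, Disjoint (A i) J) :
    IsNowhereDense (containsNoBlock A s) :=
  (isClosed_containsNoBlock hfin).isNowhereDense_iff.2 (interior_containsNoBlock_eq_empty hdisj)

end Blocks

theorem isMeagre_setOf_finite_blocks_subset {α : Type*} {A : ℕ → Set α}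
    (hfin : ∀ n, (A n).Finite) (hdisj : ∀ (J : Finset α) (k : ℕ), ∃ n ≥ k, Disjoint (A n) J) :
    IsMeagre {x : α → Bool | {n | A n ⊆ {a | x a = true}}.Finite} := by
  refine (isMeagre_iUnion fun k => (isNowhereDense_containsNoBlock (s := Ici k)
    (fun n _ => hfin n) (fun J => hdisj J k)).isMeagre).mono fun x hx => ?_
  obtain ⟨N, hN⟩ := hx.bddAbove
  refine mem_iUnion.2 ⟨N + 1, fun n hn => ?_⟩
  have hnot : ¬ A n ⊆ {a | x a = true} := fun h => by
    have := hN h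
    simp only [mem_Ici] at hn
    omega
  obtain ⟨a, ha, hxa⟩ := not_subset.1 hnot
  exact ⟨a, ha, by simpa using hxa⟩

theorem StrictMono.exists_ge_disjoint_Ico {f : ℕ → ℕ} (hf : StrictMono f) (J : Finset ℕ)
    (k : ℕ) : ∃ n ≥ k, Disjoint (Ico (f n) (f (n + 1))) J := by
  obtain ⟨N, hN⟩ := J.bddAbove
  refine ⟨max k (N + 1), le_max_left _ _, disjoint_left.2 fun m hm hmJ => ?_⟩
  have : N + 1 ≤ f (max k (N + 1)) := (le_max_right _ _).trans hf.le_apply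
  have := hN hmJ
  have := hm.1
  omega

theorem stmt_8_general (I : Set (Set ℕ))
    (hsubset : ∀ S T : Set ℕ, S ⊆ T → T ∈ I → S ∈ I)
    (hnonmeagre : ¬ IsMeagre {x : ℕ → Bool | {n | x n = true} ∈ I}) :
    ∀ f : ℕ → ℕ, StrictMono f → f 0 = 0 →
      ∃ L : Set ℕ, L.Infinite ∧ (⋃ n ∈ L, Set.Ico (f n) (f (n + 1))) ∈ I := by
  intro f hf _
  by_contra! hnone
  refine hnonmeagre ((isMeagre_setOf_finite_blocks_subset (fun n => finite_Ico _ _)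
    hf.exists_ge_disjoint_Ico).mono fun x hx => ?_)
  by_contra hinf
  exact hnone _ hinf (hsubset _ _ (iUnion₂_subset fun n hn => hn) hx)

theorem stmt_8 (I : Set (Set ℕ))
    (hsubset : ∀ S T : Set ℕ, S ⊆ T → T ∈ I → S ∈ I)
    (hunion : ∀ S T : Set ℕ, S ∈ I → T ∈ I → S ∪ T ∈ I)
    (hfin : ∀ S : Set ℕ, S.Finite → S ∈ I)
    (hnonmeagre : ¬ IsMeagre {x : ℕ → Bool | {n | x n = true} ∈ I}) :
    ∀ f : ℕ → ℕ, StrictMono f → f 0 = 0 →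
      ∃ L : Set ℕ, L.Infinite ∧ (⋃ n ∈ L, Set.Ico (f n) (f (n + 1))) ∈ I :=
  stmt_8_general I hsubset hnonmeagre
end

section
/- Let (f_i)_{i ∈ ℕ} be a countable family of strictly increasing functions ℕ → ℕ with f_i 0 = 0 (encoding partitions of ℕ into consecutive finite intervals [f_i n, f_i (n+1))). Then there exists a strictly increasing g : ℕ → ℕ with g 0 = 0 such that for every i and every sufficiently large k, the interval [g k, g (k+1)) contains some interval [f_i n, f_i (n+1)) entirely. -/
/-!
Build `g` recursively so that `g (k + 1)` exceeds `f i (g k + 1)` for every `i ≤ k`. Since a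
strictly increasing `f i` satisfies `g k ≤ f i (g k)`, the block `[f i (g k), f i (g k + 1))` of
`f i` then lies in `[g k, g (k + 1))` as soon as `k ≥ i`.
-/

def commonCoarsening (f : ℕ → ℕ → ℕ) : ℕ → ℕ
  | 0 => 0
  | k + 1 => max (commonCoarsening f k + 1)
      ((Finset.range (k + 1)).sup fun i => f i (commonCoarsening f k + 1))

namespace commonCoarsening

variable (f : ℕ → ℕ → ℕ)

theorem strictMono : StrictMono (commonCoarsening f) :=
  strictMono_nat_of_lt_succ fun _ => Nat.lt_of_succ_le (le_max_left _ _)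

variable {f}

theorem apply_succ_le {i k : ℕ} (hik : i ≤ k) :
    f i (commonCoarsening f k + 1) ≤ commonCoarsening f (k + 1) :=
  (Finset.le_sup (f := fun j => f j (commonCoarsening f k + 1))
    (Finset.mem_range.mpr (Nat.lt_succ_of_le hik))).trans (le_max_right _ _)

theorem Ico_subset_Ico {i k : ℕ} (hf : StrictMono (f i)) (hik : i ≤ k) :
    Set.Ico (f i (commonCoarsening f k)) (f i (commonCoarsening f k + 1)) ⊆
      Set.Ico (commonCoarsening f k) (commonCoarsening f (k + 1)) :=
  Set.Ico_subset_Ico hf.le_apply (apply_succ_le hik)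

end commonCoarsening

theorem stmt_13_general (f : ℕ → ℕ → ℕ) (hmono : ∀ i, StrictMono (f i)) :
    ∃ g : ℕ → ℕ, StrictMono g ∧ g 0 = 0 ∧
      ∀ i, ∃ K, ∀ k ≥ K, ∃ n,
        Set.Ico (f i n) (f i (n + 1)) ⊆ Set.Ico (g k) (g (k + 1)) :=
  ⟨commonCoarsening f, commonCoarsening.strictMono f, rfl, fun i =>
    ⟨i, fun _ hk => ⟨_, commonCoarsening.Ico_subset_Ico (hmono i) hk⟩⟩⟩

theorem stmt_13 (f : ℕ → ℕ → ℕ) (hmono : ∀ i, StrictMono (f i))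
    (h0 : ∀ i, f i 0 = 0) :
    ∃ g : ℕ → ℕ, StrictMono g ∧ g 0 = 0 ∧
      ∀ i, ∃ K, ∀ k ≥ K, ∃ n,
        Set.Ico (f i n) (f i (n + 1)) ⊆ Set.Ico (g k) (g (k + 1)) :=
  stmt_13_general f hmono
end

section
/- Let A be a C*-algebra, let a, b ∈ A be positive contractions and let x ∈ A be a contraction with ‖a - x‖ < δ and ‖b - x‖ < δ. Then ‖a^{1/2} b^{1/2} - x‖ ≤ 2δ^{1/2} + δ. -/
open scoped NNReal ENNReal

section Helpers

variable {A : Type*} [CStarAlgebra A]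

private lemma mySpectralRadius_mul_comm_le (u v : A) :
    spectralRadius ℂ (u * v) ≤ spectralRadius ℂ (v * u) := by
  rw [spectralRadius, spectralRadius]
  refine iSup₂_le fun k hk => ?_
  rcases eq_or_ne k 0 with rfl | hk0
  · simp
  · have hmem : k ∈ spectrum ℂ (u * v) \ {0} := ⟨hk, hk0⟩
    rw [spectrum.nonzero_mul_comm u v] at hmem
    exact le_iSup₂ (f := fun k (_ : k ∈ spectrum ℂ (v * u)) => (‖k‖₊ : ℝ≥0∞)) k hmem.1

private lemma myNorm_mul_sq_le {u w : A} (hu : IsSelfAdjoint u) (hw : IsSelfAdjoint w) :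
    ‖u * w‖ ^ 2 ≤ ‖u * u * (w * w)‖ := by
  obtain hss | hnt := subsingleton_or_nontrivial A
  · simp [Subsingleton.elim (u * w) 0, Subsingleton.elim (u * u * (w * w)) 0]
  have h1 : ‖u * w‖ ^ 2 = ‖w * (u * u * w)‖ := by
    rw [sq, ← CStarRing.norm_star_mul_self (x := u * w), star_mul, hu.star_eq, hw.star_eq]
    simp only [mul_assoc]
  have hp : IsSelfAdjoint (w * (u * u * w)) := by
    rw [IsSelfAdjoint]
    simp only [star_mul, hu.star_eq, hw.star_eq, mul_assoc]
  have h2 : (‖w * (u * u * w)‖₊ : ℝ≥0∞) ≤ (‖u * u * (w * w)‖₊ : ℝ≥0∞) := by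
    calc (‖w * (u * u * w)‖₊ : ℝ≥0∞) = spectralRadius ℂ (w * (u * u * w)) :=
          hp.spectralRadius_eq_nnnorm.symm
      _ ≤ spectralRadius ℂ ((u * u * w) * w) := mySpectralRadius_mul_comm_le _ _
      _ ≤ (‖(u * u * w) * w‖₊ : ℝ≥0∞) := spectrum.spectralRadius_le_nnnorm _
      _ = (‖u * u * (w * w)‖₊ : ℝ≥0∞) := by rw [mul_assoc]
  rw [h1]
  exact_mod_cast ENNReal.coe_le_coe.mp h2

variable [PartialOrder A] [StarOrderedRing A]

private lemma mySqrt_le_sqrt {a b : A} (ha : 0 ≤ a) (hb : 0 ≤ b) (hbu : IsUnit b)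
    (hab : a ≤ b) : CFC.sqrt a ≤ CFC.sqrt b := by
  have hb0 : (0 : A) ≤ CFC.sqrt b := CFC.sqrt_nonneg _
  have hbspec : (0 : ℝ≥0) ∉ spectrum ℝ≥0 b := spectrum.zero_notMem ℝ≥0 hbu
  have hhalf : (1 / 2 : ℝ) + (-(1 / 2 : ℝ)) = 0 := by norm_num
  have hhalf' : (-(1 / 2 : ℝ)) + (1 / 2 : ℝ) = 0 := by norm_num
  have h1 : CFC.sqrt b * b ^ (-(1 / 2) : ℝ) = 1 := by
    rw [CFC.sqrt_eq_rpow, ← CFC.rpow_add hbu, hhalf, CFC.rpow_zero b hb]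
  have h2 : b ^ (-(1 / 2) : ℝ) * CFC.sqrt b = 1 := by
    rw [CFC.sqrt_eq_rpow, ← CFC.rpow_add hbu, hhalf', CFC.rpow_zero b hb]
  have hsbu : IsUnit (CFC.sqrt b) := ⟨⟨CFC.sqrt b, b ^ (-(1 / 2) : ℝ), h1, h2⟩, rfl⟩
  have hsbspec : (0 : ℝ≥0) ∉ spectrum ℝ≥0 (CFC.sqrt b) := spectrum.zero_notMem ℝ≥0 hsbu
  rw [le_iff_norm_sqrt_mul_rpow _ _ (CFC.sqrt_nonneg _) (hsbu.isStrictlyPositive hb0)]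
  set u := CFC.sqrt (CFC.sqrt a) with hu_def
  set w := CFC.sqrt b ^ (-(1 / 2) : ℝ) with hw_def
  have hu : IsSelfAdjoint u := IsSelfAdjoint.of_nonneg (CFC.sqrt_nonneg _)
  have hw : IsSelfAdjoint w := IsSelfAdjoint.of_nonneg CFC.rpow_nonneg
  have huu : u * u = CFC.sqrt a := CFC.sqrt_mul_sqrt_self (CFC.sqrt a) (CFC.sqrt_nonneg _)
  have hww : w * w = b ^ (-(1 / 2) : ℝ) := by
    rw [hw_def, ← CFC.rpow_add hsbu]
    have : (-(1 / 2 : ℝ)) + (-(1 / 2 : ℝ)) = -1 := by norm_num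
    rw [this, CFC.rpow_sqrt b (-1) hbu hb]
    norm_num
  have hkey : ‖u * w‖ ^ 2 ≤ ‖CFC.sqrt a * b ^ (-(1 / 2) : ℝ)‖ := by
    have := myNorm_mul_sq_le hu hw
    rwa [huu, hww] at this
  have hle1 : ‖CFC.sqrt a * b ^ (-(1 / 2) : ℝ)‖ ≤ 1 :=
    (le_iff_norm_sqrt_mul_rpow a b ha (hbu.isStrictlyPositive hb)).mp hab
  have : ‖u * w‖ ^ 2 ≤ 1 := hkey.trans hle1
  exact (sq_le_one_iff₀ (norm_nonneg _)).mp this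

private lemma myNorm_le_of_le_algebraMap {c : A} {s : ℝ} (hs : 0 ≤ s) (hc : IsSelfAdjoint c)
    (h1 : c ≤ algebraMap ℝ A s) (h2 : -(algebraMap ℝ A s) ≤ c) : ‖c‖ ≤ s := by
  obtain h | h := subsingleton_or_nontrivial A
  · have : c = 0 := Subsingleton.elim _ _
    rw [this, norm_zero]
    exact hs
  · have hspec1 : ∀ r ∈ spectrum ℝ c, r ≤ s :=
      (le_algebraMap_iff_spectrum_le (a := c) hc).mp h1
    have hspec2 : ∀ r ∈ spectrum ℝ c, -s ≤ r := by
      have h2' : algebraMap ℝ A (-s) ≤ c := by rwa [map_neg]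
      exact (algebraMap_le_iff_le_spectrum (a := c) hc).mp h2'
    obtain hk | hk := CStarAlgebra.norm_or_neg_norm_mem_spectrum (a := c) hc
    · exact hspec1 _ hk
    · have := hspec2 _ hk
      linarith

end Helpers

theorem stmt_17 {A : Type*} [CStarAlgebra A]
    [PartialOrder A] [StarOrderedRing A]
    (δ : ℝ) (hδ : 0 < δ) (a b x : A) (ha : 0 ≤ a) (hb : 0 ≤ b)
    (ha1 : ‖a‖ ≤ 1) (hb1 : ‖b‖ ≤ 1) (hx : ‖x‖ ≤ 1)
    (hax : ‖a - x‖ < δ) (hbx : ‖b - x‖ < δ) :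
    ‖CFC.sqrt a * CFC.sqrt b - x‖ ≤ 2 * Real.sqrt δ + δ := by
  have hδ2 : (0 : ℝ) < 2 * δ := by linarith
  set s := Real.sqrt (2 * δ) with hs_def
  have hs : 0 < s := Real.sqrt_pos.mpr hδ2
  have hss : s * s = 2 * δ := Real.mul_self_sqrt hδ2.le
  -- ‖a - b‖ ≤ 2δ
  have hab_norm : ‖a - b‖ ≤ 2 * δ := by
    have : a - b = (a - x) - (b - x) := by abel
    rw [this]
    calc ‖(a - x) - (b - x)‖ ≤ ‖a - x‖ + ‖b - x‖ := norm_sub_le _ _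
      _ ≤ 2 * δ := by linarith
  have hone : (0 : A) ≤ 1 := zero_le_one
  -- two-sided domination: y ≤ z + algebraMap (2δ) for (y,z) ∈ {(a,b),(b,a)}
  have hdom : ∀ y z : A, 0 ≤ y → 0 ≤ z → ‖y - z‖ ≤ 2 * δ →
      CFC.sqrt y ≤ CFC.sqrt z + algebraMap ℝ A s := by
    intro y z hy hz hyz
    have hsa : IsSelfAdjoint (y - z) := (IsSelfAdjoint.of_nonneg hy).sub (.of_nonneg hz)
    have h1 : y - z ≤ algebraMap ℝ A ‖y - z‖ := hsa.le_algebraMap_norm_self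
    have h2 : algebraMap ℝ A ‖y - z‖ ≤ algebraMap ℝ A (2 * δ) := by
      rw [← sub_nonneg, ← map_sub]
      have : algebraMap ℝ A (2 * δ - ‖y - z‖) = (2 * δ - ‖y - z‖) • (1 : A) := by
        rw [Algebra.algebraMap_eq_smul_one]
      rw [this]
      exact smul_nonneg (by linarith) hone
    have h3 : y ≤ z + algebraMap ℝ A (2 * δ) := by
      rw [← sub_le_iff_le_add']
      exact h1.trans h2
    set e := CFC.sqrt z + algebraMap ℝ A s with he_def
    have hsz : (0 : A) ≤ CFC.sqrt z := CFC.sqrt_nonneg _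
    have he0 : (0 : A) ≤ e := by
      refine add_nonneg hsz ?_
      rw [Algebra.algebraMap_eq_smul_one]
      exact smul_nonneg hs.le hone
    have halg_nonneg : (0 : A) ≤ algebraMap ℝ A s := by
      rw [Algebra.algebraMap_eq_smul_one]
      exact smul_nonneg hs.le hone
    have halg_unit : IsUnit (algebraMap ℝ A s) :=
      (isUnit_iff_ne_zero.mpr hs.ne').map (algebraMap ℝ A)
    have heu : IsUnit e := by
      refine CStarAlgebra.isUnit_of_le _ ?_ (halg_unit.isStrictlyPositive halg_nonneg)
      exact le_add_of_nonneg_left hsz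
    have hee : z + algebraMap ℝ A (2 * δ) ≤ e * e := by
      have hexp : e * e = z + algebraMap ℝ A (2 * δ) + (2 * s) • CFC.sqrt z := by
        rw [he_def]
        have hzz : CFC.sqrt z * CFC.sqrt z = z := CFC.sqrt_mul_sqrt_self z hz
        have hcomm : CFC.sqrt z * algebraMap ℝ A s = s • CFC.sqrt z := by
          rw [Algebra.algebraMap_eq_smul_one, mul_smul_comm, mul_one]
        have hcomm' : algebraMap ℝ A s * CFC.sqrt z = s • CFC.sqrt z := by
          rw [Algebra.algebraMap_eq_smul_one, smul_mul_assoc, one_mul]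
        have halg2 : algebraMap ℝ A s * algebraMap ℝ A s = algebraMap ℝ A (2 * δ) := by
          rw [← map_mul, hss]
        rw [add_mul, mul_add, mul_add, hzz, hcomm, hcomm', halg2]
        module
      rw [hexp]
      refine le_add_of_nonneg_right ?_
      exact smul_nonneg (by linarith) hsz
    have hy_le : y ≤ e * e := h3.trans hee
    have hee_nonneg : (0 : A) ≤ e * e := by
      have : e * e = star e * e := by rw [(IsSelfAdjoint.of_nonneg he0).star_eq]
      rw [this]
      exact star_mul_self_nonneg e
    have hmono := mySqrt_le_sqrt hy hee_nonneg (heu.mul heu) hy_le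
    rwa [CFC.sqrt_mul_self e he0] at hmono
  have hab' : CFC.sqrt a ≤ CFC.sqrt b + algebraMap ℝ A s := hdom a b ha hb hab_norm
  have hba' : CFC.sqrt b ≤ CFC.sqrt a + algebraMap ℝ A s := by
    refine hdom b a hb ha ?_
    rwa [norm_sub_rev]
  -- ‖√a - √b‖ ≤ s
  have hc : IsSelfAdjoint (CFC.sqrt a - CFC.sqrt b) :=
    (IsSelfAdjoint.of_nonneg (CFC.sqrt_nonneg _)).sub (.of_nonneg (CFC.sqrt_nonneg _))
  have hnorm_sqrt : ‖CFC.sqrt a - CFC.sqrt b‖ ≤ s := by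
    refine myNorm_le_of_le_algebraMap hs.le hc ?_ ?_
    · rwa [sub_le_iff_le_add']
    · rw [neg_le, neg_sub]
      rwa [sub_le_iff_le_add']
  -- ‖√b‖ ≤ 1
  have hsb1 : ‖CFC.sqrt b‖ ≤ 1 := by
    have h1 : ‖CFC.sqrt b‖ ^ 2 = ‖b‖ := by
      rw [sq, ← CStarRing.norm_star_mul_self (x := CFC.sqrt b),
        (IsSelfAdjoint.of_nonneg (CFC.sqrt_nonneg (a := b))).star_eq,
        CFC.sqrt_mul_sqrt_self b hb]
    have : ‖CFC.sqrt b‖ ^ 2 ≤ 1 := by rw [h1]; exact hb1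
    exact (sq_le_one_iff₀ (norm_nonneg _)).mp this
  -- assemble
  have hsplit : CFC.sqrt a * CFC.sqrt b - x
      = (CFC.sqrt a - CFC.sqrt b) * CFC.sqrt b + (b - x) := by
    rw [sub_mul, CFC.sqrt_mul_sqrt_self b hb]
    abel
  have hfinal : ‖CFC.sqrt a * CFC.sqrt b - x‖ ≤ s + δ := by
    rw [hsplit]
    calc ‖(CFC.sqrt a - CFC.sqrt b) * CFC.sqrt b + (b - x)‖
        ≤ ‖(CFC.sqrt a - CFC.sqrt b) * CFC.sqrt b‖ + ‖b - x‖ := norm_add_le _ _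
      _ ≤ ‖CFC.sqrt a - CFC.sqrt b‖ * ‖CFC.sqrt b‖ + ‖b - x‖ :=
          add_le_add_left (norm_mul_le _ _) _
      _ ≤ s * 1 + δ :=
          add_le_add (mul_le_mul hnorm_sqrt hsb1 (norm_nonneg _) hs.le) hbx.le
      _ = s + δ := by ring
  have hs_le : s ≤ 2 * Real.sqrt δ := by
    rw [hs_def, show (2 : ℝ) * δ = 2 * δ from rfl, Real.sqrt_mul (by norm_num) δ]
    have h2 : Real.sqrt 2 ≤ 2 := by
      nlinarith [Real.sq_sqrt (by norm_num : (0:ℝ) ≤ 2), Real.sqrt_nonneg 2]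
    have : (0:ℝ) ≤ Real.sqrt δ := Real.sqrt_nonneg δ
    nlinarith
  linarith
end

section
/- Let I₀ and I₁ be ideals on ℕ containing all finite sets, each with the property that for every infinite S ⊆ ℕ and every partition of S into infinitely many nonempty finite pieces (P_n), there is an infinite L with ⋃_{n∈L} P_n ∈ I_j. Then the ideal I = {S ⊆ ℕ : S ∩ 2ℕ ∈ I₀ and S ∩ (2ℕ+1) ∈ I₁} also has this property (where 2ℕ denotes the even numbers). -/
/-!
Split every piece into its even and its odd part. Selecting first for `I₀` among the even parts
and then, inside the index set found, for `I₁` among the odd parts gives one infinite index set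
that works for both ideals at once, since ideals are closed under subsets. Empty parts are
harmless: if only finitely many of the relevant parts are nonempty, the remaining indices
give the empty union, which lies in every downward closed selective family.
-/

/-- The combinatorial form of being "everywhere nonmeagre": for every infinite `S ⊆ ℕ`
and every partition of `S` into infinitely many pairwise disjoint nonempty finite pieces,
there is an infinite set of indices whose corresponding union of pieces lies in the ideal. -/
def EverywhereSelective (I : Set (Set ℕ)) : Prop :=
  ∀ S : Set ℕ, S.Infinite →
    ∀ P : ℕ → Set ℕ, (∀ n, (P n).Finite) → (∀ n, (P n).Nonempty) →
      (Pairwise fun n m => Disjoint (P n) (P m)) → (⋃ n, P n) = S →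
        ∃ L : Set ℕ, L.Infinite ∧ (⋃ n ∈ L, P n) ∈ I

open Set Function

lemma Set.infinite_iUnion_of_pairwise_disjoint {ι α : Type*} [Infinite ι] {P : ι → Set α}
    (hne : ∀ i, (P i).Nonempty) (hdisj : Pairwise fun i j => Disjoint (P i) (P j)) :
    (⋃ i, P i).Infinite :=
  infinite_iUnion fun _ j hij =>
    by_contra fun hne' => (hne j).ne_empty ((hdisj hne').eq_bot_of_ge hij.ge)

namespace EverywhereSelective

variable {J : Set (Set ℕ)}

lemma exists_mem (hJ : EverywhereSelective J) : ∃ T, T ∈ J := by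
  obtain ⟨L, -, hL⟩ := hJ univ infinite_univ (fun n => {n}) (fun n => finite_singleton n)
    (fun n => singleton_nonempty n) (fun _ _ h => disjoint_singleton.2 h) (iUnion_of_singleton ℕ)
  exact ⟨_, hL⟩

lemma empty_mem (hJ : EverywhereSelective J) (hlow : IsLowerSet J) : ∅ ∈ J :=
  let ⟨_, hT⟩ := hJ.exists_mem
  hlow (empty_subset _) hT

lemma exists_infinite_subset_biUnion_mem (hJ : EverywhereSelective J) (hlow : IsLowerSet J)
    {Q : ℕ → Set ℕ} (hfin : ∀ n, (Q n).Finite) (hdisj : Pairwise fun n m => Disjoint (Q n) (Q m))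
    {M : Set ℕ} (hM : M.Infinite) :
    ∃ L ⊆ M, L.Infinite ∧ (⋃ n ∈ L, Q n) ∈ J := by
  set A : Set ℕ := {n ∈ M | (Q n).Nonempty}
  by_cases hA : A.Infinite
  · let f : ℕ → ℕ := fun k => hA.natEmbedding _ k
    have hfA : ∀ k, f k ∈ A := fun k => (hA.natEmbedding _ k).2
    have hf : Injective f := Subtype.val_injective.comp (hA.natEmbedding _).injective
    have hne : ∀ k, (Q (f k)).Nonempty := fun k => (hfA k).2
    have hdisj' : Pairwise fun k l => Disjoint (Q (f k)) (Q (f l)) :=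
      fun _ _ hkl => hdisj (hf.ne hkl)
    obtain ⟨L, hL, hLJ⟩ := hJ _ (infinite_iUnion_of_pairwise_disjoint hne hdisj')
      (fun k => Q (f k)) (fun k => hfin _) hne hdisj' rfl
    refine ⟨f '' L, image_subset_iff.2 fun k _ => (hfA k).1, hL.image hf.injOn, ?_⟩
    rwa [biUnion_image]
  · have hempty : (⋃ n ∈ M \ A, Q n) = ∅ :=
      iUnion_eq_empty.2 fun _ => iUnion_eq_empty.2 fun hn =>
        not_nonempty_iff_eq_empty.1 fun h => hn.2 ⟨hn.1, h⟩
    exact ⟨M \ A, sdiff_subset, hM.sdiff (not_infinite.1 hA), hempty ▸ hJ.empty_mem hlow⟩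

end EverywhereSelective

theorem stmt_18_general (I₀ I₁ : Set (Set ℕ))
    (hsubset₀ : ∀ S T : Set ℕ, S ⊆ T → T ∈ I₀ → S ∈ I₀)
    (hsubset₁ : ∀ S T : Set ℕ, S ⊆ T → T ∈ I₁ → S ∈ I₁)
    (h₀ : EverywhereSelective I₀) (h₁ : EverywhereSelective I₁) :
    EverywhereSelective
      {S : Set ℕ | S ∩ {n | Even n} ∈ I₀ ∧ S ∩ {n | Odd n} ∈ I₁} := by
  intro _ _ P hfin _ hdisj _
  have select := fun {J : Set (Set ℕ)} (hJ : EverywhereSelective J) (hlow : IsLowerSet J)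
      (E : Set ℕ) {M : Set ℕ} (hM : M.Infinite) =>
    hJ.exists_infinite_subset_biUnion_mem hlow (Q := fun n => P n ∩ E)
      (fun n => (hfin n).inter_of_left E)
      (fun _ _ hnm => (hdisj hnm).mono inter_subset_left inter_subset_left) hM
  obtain ⟨L₀, -, hL₀, hL₀I⟩ :=
    select h₀ (fun _ _ h hT => hsubset₀ _ _ h hT) {n | Even n} infinite_univ
  obtain ⟨L, hLL₀, hL, hLI⟩ :=
    select h₁ (fun _ _ h hT => hsubset₁ _ _ h hT) {n | Odd n} hL₀
  refine ⟨L, hL, ?_, ?_⟩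
  · rw [iUnion₂_inter]
    exact hsubset₀ _ _ (biUnion_subset_biUnion_left hLL₀) hL₀I
  · rw [iUnion₂_inter]
    exact hLI

theorem stmt_18 (I₀ I₁ : Set (Set ℕ))
    (hsubset₀ : ∀ S T : Set ℕ, S ⊆ T → T ∈ I₀ → S ∈ I₀)
    (hunion₀ : ∀ S T : Set ℕ, S ∈ I₀ → T ∈ I₀ → S ∪ T ∈ I₀)
    (hfin₀ : ∀ S : Set ℕ, S.Finite → S ∈ I₀)
    (hsubset₁ : ∀ S T : Set ℕ, S ⊆ T → T ∈ I₁ → S ∈ I₁)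
    (hunion₁ : ∀ S T : Set ℕ, S ∈ I₁ → T ∈ I₁ → S ∪ T ∈ I₁)
    (hfin₁ : ∀ S : Set ℕ, S.Finite → S ∈ I₁)
    (h₀ : EverywhereSelective I₀) (h₁ : EverywhereSelective I₁) :
    EverywhereSelective
      {S : Set ℕ | S ∩ {n | Even n} ∈ I₀ ∧ S ∩ {n | Odd n} ∈ I₁} :=
  stmt_18_general I₀ I₁ hsubset₀ hsubset₁ h₀ h₁
end
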